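/- In minimal logic with the axioms needed to derive S → T(⊥) for the liar proposition S (the schemes A → T(A), T(A) ∧ T(B) → T(A ∧ B), T(A ∧ ¬A) → T(⊥), plus a monotonicity scheme (A → B) derivable implies T(A) → T(B) derivable), ¬T(⊥) → ¬T(S) is derivable. -/
import Mathlib


/-- Propositional formulas built from variables and ⊥ using ∧, ∨, →. -/
inductive Fm : Type
  | var : ℕ → Fm
  | bot : Fm
  | and : Fm → Fm → Fm
  | or : Fm → Fm → Fm
  | imp : Fm → Fm → Fm
deriving DecidableEq

/-- ¬A is defined as A → ⊥. -/
def Fm.neg (A : Fm) : Fm := A.imp .bot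

/-- Hilbert-style derivability in minimal propositional logic (intuitionistic
logic without ex falso quodlibet), extended by an extra set `Ax` of axioms. -/
inductive Deriv (Ax : Fm → Prop) : Fm → Prop
  | ax {A} : Ax A → Deriv Ax A
  | k (A B : Fm) : Deriv Ax (A.imp (B.imp A))
  | s (A B C : Fm) : Deriv Ax ((A.imp (B.imp C)).imp ((A.imp B).imp (A.imp C)))
  | andI (A B : Fm) : Deriv Ax (A.imp (B.imp (A.and B)))
  | andE1 (A B : Fm) : Deriv Ax ((A.and B).imp A)
  | andE2 (A B : Fm) : Deriv Ax ((A.and B).imp B)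
  | orI1 (A B : Fm) : Deriv Ax (A.imp (A.or B))
  | orI2 (A B : Fm) : Deriv Ax (B.imp (A.or B))
  | orE (A B C : Fm) : Deriv Ax ((A.imp C).imp ((B.imp C).imp ((A.or B).imp C)))
  | mp {A B : Fm} : Deriv Ax (A.imp B) → Deriv Ax A → Deriv Ax B


namespace Deriv

variable {Ax : Fm → Prop}

/-- Identity: ⊢ A → A. -/
theorem idd (A : Fm) : Deriv Ax (A.imp A) :=
  (Deriv.s A (A.imp A) A).mp (Deriv.k A (A.imp A)) |>.mp (Deriv.k A A)

/-- Composition: from A → B and B → C get A → C. -/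
theorem comp {A B C : Fm} (h1 : Deriv Ax (A.imp B)) (h2 : Deriv Ax (B.imp C)) :
    Deriv Ax (A.imp C) :=
  ((Deriv.s A B C).mp ((Deriv.k (B.imp C) A).mp h2)).mp h1

/-- Pairing: from A → B and A → C get A → B ∧ C. -/
theorem pair {A B C : Fm} (h1 : Deriv Ax (A.imp B)) (h2 : Deriv Ax (A.imp C)) :
    Deriv Ax (A.imp (B.and C)) :=
  ((Deriv.s A C (B.and C)).mp (h1.comp (Deriv.andI B C))).mp h2

/-- From A → (B → C) and A → B get A → C. -/
theorem apS {A B C : Fm} (h1 : Deriv Ax (A.imp (B.imp C))) (h2 : Deriv Ax (A.imp B)) :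
    Deriv Ax (A.imp C) :=
  ((Deriv.s A B C).mp h1).mp h2

end Deriv

/-- with schemes A → T(A), T(A) ∧ T(B) → T(A ∧ B),
T(A ∧ ¬A) → T(⊥), the derived monotonicity rule, and a liar proposition S
with S ↔ T(¬S) derivable, ¬T(⊥) → ¬T(S) is derivable. -/
theorem stmt7 (T : Fm → Fm) (Ax : Fm → Prop)
    (hT1 : ∀ A : Fm, Deriv Ax (A.imp (T A)))
    (hT2 : ∀ A B : Fm, Deriv Ax (((T A).and (T B)).imp (T (A.and B))))
    (hT3 : ∀ A : Fm, Deriv Ax ((T (A.and A.neg)).imp (T .bot)))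
    (hmono : ∀ A B : Fm, Deriv Ax (A.imp B) → Deriv Ax ((T A).imp (T B)))
    (S : Fm)
    (hS1 : Deriv Ax (S.imp (T S.neg)))
    (hS2 : Deriv Ax ((T S.neg).imp S)) :
    Deriv Ax ((T Fm.bot).neg.imp (T S).neg) := by
  have dS : Deriv Ax (S.imp (T Fm.bot)) :=
    (((hT1 S).pair hS1).comp (hT2 S S.neg)).comp (hT3 S)
  have dNS : Deriv Ax (S.neg.imp (T Fm.bot)) :=
    ((hT1 S.neg).comp hS2).comp dS
  have d1 : Deriv Ax ((T Fm.bot).neg.imp S.neg) :=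
    (((Deriv.k ((S.imp ((T Fm.bot).imp Fm.bot)).imp ((S.imp (T Fm.bot)).imp S.neg)) (T Fm.bot).neg).mp
        (Deriv.s S (T Fm.bot) Fm.bot)).apS
      (Deriv.k (T Fm.bot).neg S)).apS
      ((Deriv.k (S.imp (T Fm.bot)) (T Fm.bot).neg).mp dS)
  have d2 : Deriv Ax ((T Fm.bot).neg.imp Fm.bot) :=
    (Deriv.idd (T Fm.bot).neg).apS (d1.comp dNS)
  exact d2.comp (Deriv.k Fm.bot (T S))
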